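/- Let n ≥ 1. For all facets F and G of Δ(n) such that F precedes G in the order O, there exist a facet H of Δ(n) preceding G in the order O and a vertex v ∈ G such that F ∩ G ⊆ H ∩ G = G \ {v}. Consequently, the order O is a shelling order of the (non-pure) simplicial complex Δ(n). -/

import Mathlib

/-- Vertices of `Δ(n)`: integer triples. -/
abbrev V : Type := ℕ × ℕ × ℕ

/-- The strict componentwise order on triples. -/
def slt (u v : V) : Prop := u.1 < v.1 ∧ u.2.1 < v.2.1 ∧ u.2.2 < v.2.2

/-- A face of `Δ(n)`: a finite subset of `{1,…,n}³` that is a chain under `slt`. -/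
def IsFace (n : ℕ) (F : Finset V) : Prop :=
  (∀ v ∈ F, v.1 ∈ Finset.Icc 1 n ∧ v.2.1 ∈ Finset.Icc 1 n ∧ v.2.2 ∈ Finset.Icc 1 n) ∧
  (∀ u ∈ F, ∀ v ∈ F, u ≠ v → slt u v ∨ slt v u)

/-- A facet of `Δ(n)`: an inclusion-maximal face. -/
def IsFacet (n : ℕ) (F : Finset V) : Prop :=
  IsFace n F ∧ ∀ G : Finset V, IsFace n G → F ⊆ G → F = G

/-- The σ-word of a list of vertices: concatenate the coordinates in order. -/
def sigmaWord (L : List V) : List ℕ :=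
  L.foldr (fun v acc => v.1 :: v.2.1 :: v.2.2 :: acc) []

/-- `F` precedes `G` in the order `O`: facets of larger cardinality come first, and
facets of equal cardinality are ordered by lexicographic order on their σ-words
(computed from the increasingly sorted listings, which are unique for chains). -/
def OPrec (F G : Finset V) : Prop :=
  G.card < F.card ∨
    (F.card = G.card ∧ ∃ LF LG : List V, LF.Chain' slt ∧ LG.Chain' slt ∧
      LF.toFinset = F ∧ LG.toFinset = G ∧
      List.Lex (· < ·) (sigmaWord LF) (sigmaWord LG))

/-!
Padded with the virtual endpoints `(0,0,0)` and `(n+1,n+1,n+1)`, a facet of `Δ(n)` is a saturated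
chain: each step raises some coordinate by exactly one, so no vertex fits strictly between
consecutive vertices.

If some vertex `v` of `G` outside `F` is not the diagonal successor `p + (1,1,1)` of its
predecessor `p`, replace `v` by the diagonal run `p + 1, …, p + k` that still reaches the
successor of `v` by a step. The resulting facet `H` meets `G` in `G \ {v}`, and it precedes `G`:
it is longer when `k ≥ 2`, and lexicographically smaller when `k = 1` since `p + 1 ≤ v`.

Otherwise every vertex of `G` outside `F` is a diagonal successor. Walking along both chains,
the `i`-th vertex of `F` then dominates the `i`-th vertex of `G` componentwise, and `F` has no
more vertices than `G`; so `F` cannot precede `G`.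
-/

namespace List

variable {α : Type*}

theorem exists_adjacent_of_forall_or {p q : α → Prop} {b : α} (hb : q b) :
    ∀ {a : α} {l : List α}, p a → (∀ x ∈ l, p x ∨ q x) →
      ∃ X c d Y, a :: (l ++ [b]) = X ++ c :: d :: Y ∧ p c ∧ q d
  | a, [], ha, _ => ⟨[], a, b, [], rfl, ha, hb⟩
  | a, x :: l, ha, hl => by
    rcases hl x (mem_cons_self ..) with hx | hx
    · obtain ⟨X, c, d, Y, hXY, hc, hd⟩ :=
        exists_adjacent_of_forall_or hb hx fun y hy => hl y (mem_cons_of_mem x hy)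
      exact ⟨a :: X, c, d, Y, by simp [hXY], hc, hd⟩
    · exact ⟨[], a, x, l ++ [b], rfl, ha, hx⟩

theorem Pairwise.rel_or_rel_of_adjacent {r : α → α → Prop} [IsTrans α r] {X Y : List α}
    {a b w x : α} (h : (X ++ a :: b :: Y).Pairwise r) (haw : r a w) (hwb : r w b)
    (hx : x ∈ X ++ a :: b :: Y) : r x w ∨ r w x := by
  simp only [pairwise_append, pairwise_cons, mem_cons] at h
  simp only [mem_append, mem_cons] at hx
  rcases hx with hx | rfl | rfl | hx
  · exact .inl (_root_.trans (h.2.2 x hx a (.inl rfl)) haw)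
  · exact .inl haw
  · exact .inr hwb
  · exact .inr (_root_.trans hwb (h.2.1.2.1 x hx))

theorem Forall₂.not_lex_swap [Preorder α] {l₁ l₂ : List α} (h : Forall₂ (· ≤ ·) l₁ l₂) :
    ¬ Lex (· < ·) l₂ l₁ := by
  induction h with
  | nil => exact not_lex_nil
  | cons hab _ ih =>
    intro h
    cases h with
    | cons h => exact ih h
    | rel h => exact hab.not_gt h

theorem Forall₂.lex_of_ne [PartialOrder α] {l₁ l₂ : List α} (h : Forall₂ (· ≤ ·) l₁ l₂)
    (hne : l₁ ≠ l₂) : Lex (· < ·) l₁ l₂ := by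
  induction h with
  | nil => exact absurd rfl hne
  | @cons a b _ _ hab _ ih =>
    obtain rfl | hab := hab.eq_or_lt
    · exact .cons (ih fun h => hne (h ▸ rfl))
    · exact .rel hab

theorem IsChain.splice {R : α → α → Prop} {X M Z : List α} {p v q : α}
    (h : (X ++ p :: v :: q :: Z).IsChain R) (hM : (p :: (M ++ [q])).IsChain R) :
    (X ++ p :: (M ++ q :: Z)).IsChain R := by
  have hX : (X ++ [p]).IsChain R := by
    simpa using (show (X ++ [p] ++ v :: q :: Z).IsChain R by simpa using h).left_of_append
  have hZ : ([q] ++ Z).IsChain R := by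
    simpa using (show ((X ++ [p, v]) ++ q :: Z).IsChain R by simpa using h).right_of_append
  have hMZ : ((p :: M) ++ [q] ++ Z).IsChain R := .append_overlap (by simpa using hM) hZ (by simp)
  simpa using hX.append_overlap (l₃ := M ++ q :: Z) (by simpa using hMZ) (by simp)

theorem toFinset_inter_eq_erase [DecidableEq α] {A D Y : List α} {v : α}
    (hD : ∀ x ∈ D, x ∉ A ++ v :: Y) (hnd : (A ++ v :: Y).Nodup) :
    (A ++ D ++ Y).toFinset ∩ (A ++ v :: Y).toFinset = (A ++ v :: Y).toFinset.erase v := by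
  have hv : v ∉ A ++ Y := (nodup_cons.1 (nodup_middle.1 hnd)).1
  ext x
  simp only [mem_append, mem_cons] at hD hv
  simp only [Finset.mem_inter, Finset.mem_erase, mem_toFinset, mem_append, mem_cons]
  constructor
  · rintro ⟨(hx | hx) | hx, hxG⟩
    · exact ⟨fun h => hv (.inl (h ▸ hx)), hxG⟩
    · exact (hD x hx hxG).elim
    · exact ⟨fun h => hv (.inr (h ▸ hx)), hxG⟩
  · rintro ⟨hxv, hx | hx | hx⟩
    exacts [⟨.inl (.inl hx), .inl hx⟩, (hxv hx).elim, ⟨.inr hx, .inr (.inr hx)⟩]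

end List

theorem slt_irrefl (a : V) : ¬ slt a a := by simp [slt]

theorem slt_trans {a b c : V} (hab : slt a b) (hbc : slt b c) : slt a c := by
  simp only [slt] at *; omega

theorem slt_ne {a b : V} (h : slt a b) : a ≠ b := by
  rintro rfl; exact slt_irrefl a h

instance : IsTrans V slt := ⟨fun _ _ _ => slt_trans⟩

instance : Std.Antisymm slt := ⟨fun a _ hab hba => (slt_irrefl a (slt_trans hab hba)).elim⟩

theorem slt_of_le_of_slt {a b c : V} (hab : a ≤ b) (hbc : slt b c) : slt a c := by
  simp only [slt, Prod.le_def] at *; omega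

theorem slt_of_slt_of_le {a b c : V} (hab : slt a b) (hbc : b ≤ c) : slt a c := by
  simp only [slt, Prod.le_def] at *; omega

theorem le_of_slt {a b : V} (h : slt a b) : a ≤ b := by
  simp only [slt, Prod.le_def] at *; omega

theorem List.nodup_of_isChain_slt {L : List V} (h : L.IsChain slt) : L.Nodup :=
  h.pairwise.imp slt_ne

theorem List.eq_of_isChain_slt_of_toFinset_eq {L₁ L₂ : List V} (h₁ : L₁.IsChain slt)
    (h₂ : L₂.IsChain slt) (h : L₁.toFinset = L₂.toFinset) : L₁ = L₂ :=
  (perm_of_nodup_nodup_toFinset_eq (nodup_of_isChain_slt h₁) (nodup_of_isChain_slt h₂)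
    h).eq_of_pairwise' h₁.pairwise h₂.pairwise

theorem exists_isChain_slt_toFinset_eq {F : Finset V} (hF : IsChain slt (F : Set V)) :
    ∃ L : List V, L.IsChain slt ∧ L.toFinset = F := by
  induction F using Finset.induction_on_min_value (fun v : V => v.1) with
  | empty => exact ⟨[], .nil, rfl⟩
  | insert a s ha hmin ih =>
    obtain ⟨L, hL, rfl⟩ := ih (hF.mono (by simp))
    refine ⟨a :: L, List.isChain_cons.2 ⟨fun y hy => ?_, hL⟩, by simp⟩
    have hyL : y ∈ L.toFinset := List.mem_toFinset.2 (List.mem_of_mem_head? hy)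
    have hay : a ≠ y := fun h => ha (h ▸ hyL)
    rcases hF (by simp) (Finset.mem_insert_of_mem hyL) hay with h | h
    · exact h
    · exact absurd (hmin y hyL) (not_le.2 h.1)

@[simp] theorem sigmaWord_nil : sigmaWord [] = [] := rfl

@[simp] theorem sigmaWord_cons (v : V) (L : List V) :
    sigmaWord (v :: L) = v.1 :: v.2.1 :: v.2.2 :: sigmaWord L := rfl

theorem sigmaWord_injective : Function.Injective sigmaWord := by
  intro L₁ L₂ h
  induction L₁ generalizing L₂ with
  | nil => cases L₂ <;> simp_all
  | cons a L₁ ih =>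
    cases L₂ with
    | nil => simp at h
    | cons b L₂ =>
      simp only [sigmaWord_cons, List.cons.injEq] at h
      obtain ⟨h1, h2, h3, h⟩ := h
      rw [ih h, Prod.ext h1 (Prod.ext h2 h3)]

theorem List.Forall₂.sigmaWord {L₁ L₂ : List V} (h : Forall₂ (· ≤ ·) L₁ L₂) :
    Forall₂ (· ≤ ·) (_root_.sigmaWord L₁) (_root_.sigmaWord L₂) := by
  induction h with
  | nil => exact .nil
  | cons hab _ ih =>
    simp only [Prod.le_def] at hab
    exact .cons hab.1 (.cons hab.2.1 (.cons hab.2.2 ih))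

theorem oPrec_toFinset_iff {LF LG : List V} (hF : LF.IsChain slt) (hG : LG.IsChain slt) :
    OPrec LF.toFinset LG.toFinset ↔ LG.length < LF.length ∨
      (LF.length = LG.length ∧ List.Lex (· < ·) (sigmaWord LF) (sigmaWord LG)) := by
  simp only [OPrec, List.toFinset_card_of_nodup (List.nodup_of_isChain_slt hF),
    List.toFinset_card_of_nodup (List.nodup_of_isChain_slt hG)]
  refine or_congr_right (and_congr_right fun _ => ⟨?_, fun h => ⟨LF, LG, hF, hG, rfl, rfl, h⟩⟩)
  rintro ⟨LF', LG', hF', hG', hLF, hLG, h⟩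
  rwa [List.eq_of_isChain_slt_of_toFinset_eq hF' hF hLF,
    List.eq_of_isChain_slt_of_toFinset_eq hG' hG hLG] at h

theorem oPrec_of_forall₂_le {LF LG : List V} (hF : LF.IsChain slt) (hG : LG.IsChain slt)
    (hle : List.Forall₂ (· ≤ ·) LF LG) (hne : LF ≠ LG) : OPrec LF.toFinset LG.toFinset :=
  (oPrec_toFinset_iff hF hG).2 <| .inr ⟨hle.length_eq,
    hle.sigmaWord.lex_of_ne (sigmaWord_injective.ne hne)⟩

def origin : V := (0, 0, 0)

def corner (n : ℕ) : V := (n + 1, n + 1, n + 1)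

def shift (p : V) (j : ℕ) : V := (p.1 + j, p.2.1 + j, p.2.2 + j)

def IsStep (u v : V) : Prop :=
  slt u v ∧ (v.1 = u.1 + 1 ∨ v.2.1 = u.2.1 + 1 ∨ v.2.2 = u.2.2 + 1)

def IsFacetList (n : ℕ) (L : List V) : Prop :=
  (origin :: (L ++ [corner n])).IsChain IsStep

def diagonal (p : V) : ℕ → List V
  | 0 => []
  | k + 1 => shift p 1 :: diagonal (shift p 1) k

theorem shift_shift (p : V) (i j : ℕ) : shift (shift p i) j = shift p (i + j) := by
  simp only [shift, add_assoc]

@[simp] theorem length_diagonal (p : V) (k : ℕ) : (diagonal p k).length = k := by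
  induction k generalizing p <;> simp_all [diagonal]

theorem shift_one_le_iff {a b : V} : shift a 1 ≤ b ↔ slt a b := by
  simp only [shift, slt, Prod.le_def]; omega

theorem IsStep.not_slt_of_slt {a b w : V} (h : IsStep a b) (haw : slt a w) : ¬ slt w b := by
  simp only [IsStep, slt] at *; omega

theorem mem_box_iff {n : ℕ} {v : V} :
    (v.1 ∈ Finset.Icc 1 n ∧ v.2.1 ∈ Finset.Icc 1 n ∧ v.2.2 ∈ Finset.Icc 1 n) ↔
      slt origin v ∧ slt v (corner n) := by
  simp only [Finset.mem_Icc, slt, origin, corner]; omega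

theorem IsFace.insert {n : ℕ} {F : Finset V} {w : V} (hF : IsFace n F)
    (hw : slt origin w ∧ slt w (corner n)) (hcomp : ∀ x ∈ F, slt x w ∨ slt w x) :
    IsFace n (insert w F) := by
  refine ⟨fun x hx => ?_, fun u hu v hv huv => ?_⟩
  · rcases Finset.mem_insert.1 hx with rfl | hx
    exacts [mem_box_iff.2 hw, hF.1 x hx]
  · simp only [Finset.mem_insert] at hu hv
    rcases hu with rfl | hu <;> rcases hv with rfl | hv
    · exact absurd rfl huv
    · exact (hcomp v hv).symm
    · exact hcomp u hu
    · exact hF.2 u hu v hv huv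

namespace IsFacetList

variable {n : ℕ} {L : List V}

theorem pairwise (h : IsFacetList n L) : (origin :: (L ++ [corner n])).Pairwise slt :=
  (h.imp fun _ _ => And.left).pairwise

theorem isChain (h : IsFacetList n L) : L.IsChain slt :=
  (List.pairwise_append.1 (List.pairwise_cons.1 h.pairwise).2).1.isChain

theorem card_toFinset (h : IsFacetList n L) : L.toFinset.card = L.length :=
  List.toFinset_card_of_nodup (List.nodup_of_isChain_slt h.isChain)

theorem mem_box (h : IsFacetList n L) {x : V} (hx : x ∈ L) : slt origin x ∧ slt x (corner n) := by
  have := h.pairwise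
  simp only [List.pairwise_cons, List.pairwise_append, List.mem_append, List.mem_singleton] at this
  exact ⟨this.1 x (.inl hx), this.2.2.2 x hx _ rfl⟩

theorem isFacet (h : IsFacetList n L) : IsFacet n L.toFinset := by
  have hface : IsFace n L.toFinset :=
    ⟨fun x hx => mem_box_iff.2 (h.mem_box (List.mem_toFinset.1 hx)), fun u hu v hv huv => by
      let R (a b : V) : Prop := slt a b ∨ slt b a
      have : Std.Symm R := ⟨fun _ _ => Or.symm⟩
      exact (h.isChain.pairwise.imp (S := R) Or.inl).forall
        (List.mem_toFinset.1 hu) (List.mem_toFinset.1 hv) huv⟩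
  refine ⟨hface, fun G hG hLG => (Finset.Subset.antisymm hLG fun w hw => ?_)⟩
  by_contra hwL
  have hbox := mem_box_iff.1 (hG.1 w hw)
  have hcomp (x) (hx : x ∈ L) : slt x w ∨ slt w x :=
    hG.2 x (hLG (List.mem_toFinset.2 hx)) w hw fun h => hwL (h ▸ List.mem_toFinset.2 hx)
  obtain ⟨X, c, d, Y, hXY, hcw, hwd⟩ :=
    List.exists_adjacent_of_forall_or (p := (slt · w)) (q := (slt w ·)) hbox.2 hbox.1 hcomp
  exact (List.isChain_iff_forall_rel_of_append_cons_cons.1 h hXY).not_slt_of_slt hcw hwd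

end IsFacetList

theorem pairwise_origin_cons_append_corner {n : ℕ} {L : List V} (hL : L.Pairwise slt)
    (hbox : ∀ x ∈ L, slt origin x ∧ slt x (corner n)) :
    (origin :: (L ++ [corner n])).Pairwise slt := by
  simp only [List.pairwise_cons, List.pairwise_append, List.mem_append, List.mem_singleton]
  refine ⟨?_, hL, by simp, fun x hx _ hy => hy ▸ (hbox x hx).2⟩
  rintro x (hx | rfl)
  exacts [(hbox x hx).1, by simp [slt, origin, corner]]

theorem IsFacet.exists_isFacetList {n : ℕ} {F : Finset V} (hF : IsFacet n F) :
    ∃ L, IsFacetList n L ∧ L.toFinset = F := by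
  obtain ⟨L, hL, rfl⟩ := exists_isChain_slt_toFinset_eq hF.1.2
  have hP : (origin :: (L ++ [corner n])).Pairwise slt := pairwise_origin_cons_append_corner
    hL.pairwise fun x hx => mem_box_iff.1 (hF.1.1 x (List.mem_toFinset.2 hx))
  have hle (x) (hx : x ∈ origin :: (L ++ [corner n])) : x ≤ corner n := by
    simpa using (hP.imp le_of_slt).rel_getLast hx
  refine ⟨L, List.isChain_iff_forall_rel_of_append_cons_cons.2 fun c d X Y hXY => ?_, rfl⟩
  have hmem {x} (hx : x ∈ L.toFinset) : x ∈ X ++ c :: d :: Y := by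
    rw [← hXY]; simp [List.mem_toFinset.1 hx]
  rw [hXY] at hP hle
  have hcd : slt c d := List.isChain_iff_forall_rel_of_append_cons_cons.1 hP.isChain rfl
  refine ⟨hcd, not_not.1 fun hgap => ?_⟩
  -- otherwise the diagonal successor of `c` fits between `c` and `d`, and `F` is not maximal
  set w := shift c 1
  have hcw : slt c w := by simp only [w, slt, shift]; omega
  have hwd : slt w d := by simp only [w, slt, shift] at *; omega
  have hwF : w ∈ L.toFinset := by
    have hwbox : slt origin w ∧ slt w (corner n) :=
      ⟨by simp [w, slt, origin, shift], slt_of_slt_of_le hwd (hle d (by simp))⟩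
    have hcomp (x) (hx : x ∈ L.toFinset) : slt x w ∨ slt w x :=
      hP.rel_or_rel_of_adjacent hcw hwd (hmem hx)
    rw [hF.2 _ (hF.1.insert hwbox hcomp) (Finset.subset_insert _ _)]
    exact Finset.mem_insert_self _ _
  exact slt_irrefl w ((hP.rel_or_rel_of_adjacent hcw hwd (hmem hwF)).elim id id)

theorem exists_eq_shift_of_mem_diagonal {p x : V} {k : ℕ} (hx : x ∈ diagonal p k) :
    ∃ i, 1 ≤ i ∧ i ≤ k ∧ x = shift p i := by
  induction k generalizing p with
  | zero => simp [diagonal] at hx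
  | succ k ih =>
    rcases List.mem_cons.1 hx with rfl | hx
    · exact ⟨1, le_rfl, by omega, rfl⟩
    · obtain ⟨i, hi1, hik, rfl⟩ := ih hx
      exact ⟨1 + i, by omega, by omega, shift_shift p 1 i⟩

theorem isChain_isStep_diagonal {p q : V} {k : ℕ} (hk : IsStep (shift p k) q) :
    (p :: (diagonal p k ++ [q])).IsChain IsStep := by
  induction k generalizing p with
  | zero => exact .cons_cons hk (.singleton q)
  | succ k ih =>
    refine .cons_cons ⟨?_, .inl rfl⟩ (ih (by rwa [shift_shift, add_comm]))
    simp only [slt, shift]; omega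

theorem exists_isStep_shift {p q : V} (h : slt p q) : ∃ k, IsStep (shift p k) q :=
  ⟨min (q.1 - p.1) (min (q.2.1 - p.2.1) (q.2.2 - p.2.2)) - 1, by
    simp only [IsStep, slt, shift] at *; omega⟩

theorem slt_of_mem_diagonal {p q x : V} {k : ℕ} (hk : IsStep (shift p k) q)
    (hx : x ∈ diagonal p k) : slt p x ∧ slt x q := by
  obtain ⟨i, hi1, hik, rfl⟩ := exists_eq_shift_of_mem_diagonal hx
  simp only [IsStep, slt, shift] at *; omega

theorem IsStep.not_mem_diagonal {p v : V} {k : ℕ} (hpv : IsStep p v) (hv : v ≠ shift p 1) :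
    v ∉ diagonal p k := fun hmem => by
  obtain ⟨i, hi1, -, rfl⟩ := exists_eq_shift_of_mem_diagonal hmem
  obtain rfl | hi := hi1.eq_or_lt
  · exact hv rfl
  · simp only [IsStep, slt, shift] at hpv; omega

theorem oPrec_of_replace_by_diagonal {n k : ℕ} {A Y : List V} {p v : V}
    (hH : IsFacetList n (A ++ diagonal p k ++ Y)) (hG : IsFacetList n (A ++ v :: Y))
    (hk : k ≠ 0) (hpv : slt p v) (hv : v ≠ shift p 1) :
    OPrec (A ++ diagonal p k ++ Y).toFinset (A ++ v :: Y).toFinset := by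
  obtain rfl | hk := (Nat.one_le_iff_ne_zero.2 hk).eq_or_lt
  · refine oPrec_of_forall₂_le hH.isChain hG.isChain ?_ (by simpa [diagonal] using hv.symm)
    simpa [diagonal] using List.rel_append (List.forall₂_refl A)
      (List.Forall₂.cons (shift_one_le_iff.2 hpv) (List.forall₂_refl Y))
  · left
    simp only [hH.card_toFinset, hG.card_toFinset, List.length_append, length_diagonal,
      List.length_cons]
    omega

theorem IsFacetList.exists_isFacet_inter_eq_erase {n : ℕ} {LG X Y : List V} {p v : V}
    (hG : IsFacetList n LG) (hsplit : origin :: LG = X ++ p :: v :: Y) (hv : v ≠ shift p 1) :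
    ∃ H, IsFacet n H ∧ OPrec H LG.toFinset ∧ v ∈ LG.toFinset ∧
      H ∩ LG.toFinset = LG.toFinset.erase v := by
  obtain ⟨A, hA, rfl⟩ : ∃ A, X ++ [p] = origin :: A ∧ LG = A ++ v :: Y := by
    rw [show X ++ p :: v :: Y = (X ++ [p]) ++ v :: Y by simp, List.cons_eq_append_iff] at hsplit
    simpa using hsplit
  obtain ⟨q, Z, hYZ⟩ : ∃ q Z, Y ++ [corner n] = q :: Z := List.exists_cons_of_ne_nil (by simp)
  have hpad {M : List V} :
      origin :: (A ++ M ++ Y ++ [corner n]) = X ++ p :: (M ++ q :: Z) := by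
    rw [List.append_assoc, List.append_assoc, hYZ, ← List.cons_append, ← hA]; simp
  have hGc : (X ++ p :: v :: q :: Z).IsChain IsStep := by
    rw [show p :: v :: q :: Z = p :: ([v] ++ q :: Z) from rfl, ← hpad]
    simpa [IsFacetList] using hG
  have hpv : IsStep p v := List.isChain_iff_forall_rel_of_append_cons_cons.1 hGc rfl
  have hvq : IsStep v q :=
    List.isChain_iff_forall_rel_of_append_cons_cons.1 hGc (l₁ := X ++ [p]) (l₂ := Z) (by simp)
  obtain ⟨k, hk⟩ := exists_isStep_shift (slt_trans hpv.1 hvq.1)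
  have hH : IsFacetList n (A ++ diagonal p k ++ Y) := by
    rw [IsFacetList, hpad]; exact hGc.splice (isChain_isStep_diagonal hk)
  have hD (x) (hx : x ∈ diagonal p k) : x ∉ A ++ v :: Y := fun hxG => by
    have hxv : x ≠ v := fun h => hpv.not_mem_diagonal hv (h ▸ hx)
    have hP : (X ++ p :: q :: Z).Pairwise slt := by
      refine List.Pairwise.sublist ?_ ((hGc.imp fun _ _ => And.left).pairwise)
      exact (List.sublist_cons_self v _).cons_cons p |>.append_left X
    have hxP : x ∈ X ++ p :: q :: Z := by
      have : x ∈ X ++ p :: ([v] ++ q :: Z) := by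
        rw [← hpad]; simp only [List.mem_append, List.mem_cons] at hxG ⊢; tauto
      simp only [List.mem_append, List.mem_cons] at this ⊢
      tauto
    obtain ⟨hpx, hxq⟩ := slt_of_mem_diagonal hk hx
    exact slt_irrefl x ((hP.rel_or_rel_of_adjacent hpx hxq hxP).elim id id)
  have hk0 : k ≠ 0 := by
    rintro rfl; exact hk.not_slt_of_slt hpv.1 hvq.1
  exact ⟨_, hH.isFacet, oPrec_of_replace_by_diagonal hH hG hk0 hpv.1 hv, by simp,
    List.toFinset_inter_eq_erase hD (List.nodup_of_isChain_slt hG.isChain)⟩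

theorem exists_append_forall₂_le {F : Finset V} (hF : IsChain slt (F : Set V)) {t : V} :
    ∀ {LG LF : List V} {c d : V}, c ≤ d → (c :: (LG ++ [t])).IsChain IsStep →
      (d :: (LF ++ [t])).IsChain slt → (∀ x ∈ LF, x ∈ F) →
      (c :: LG).IsChain (fun a b => b ∉ F → b = shift a 1) →
      ∃ LG₁ LG₂, LG = LG₁ ++ LG₂ ∧ List.Forall₂ (· ≤ ·) LG₁ LF
  | LG, [], _, _, _, _, _, _, _ => ⟨[], LG, rfl, .nil⟩
  | [], f :: LF, c, d, hcd, hG, hLF, _, _ => by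
    have hct : IsStep c t := List.isChain_pair.1 hG
    have hP := hLF.pairwise
    simp only [List.cons_append, List.pairwise_cons, List.mem_cons, List.mem_append] at hP
    exact (hct.not_slt_of_slt (slt_of_le_of_slt hcd (hP.1 f (.inl rfl)))
      (hP.2.1 t (.inr (.inl rfl)))).elim
  | g :: LG, f :: LF, c, d, hcd, hG, hLF, hLFF, hR => by
    obtain ⟨hcg, hG⟩ := List.isChain_cons_cons.1 hG
    obtain ⟨hdf, hLF⟩ := List.isChain_cons_cons.1 hLF
    obtain ⟨hRcg, hR⟩ := List.isChain_cons_cons.1 hR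
    have hcf : slt c f := slt_of_le_of_slt hcd hdf
    -- if `g ∈ F` came after `f`, then `f` would fit into the step from `c` to `g`
    have hgf : g ≤ f := by
      by_cases hg : g ∈ F
      · obtain rfl | hne := eq_or_ne g f
        · exact le_rfl
        rcases hF hg (hLFF f (List.mem_cons_self ..)) hne with h | h
        · exact le_of_slt h
        · exact absurd h (hcg.not_slt_of_slt hcf)
      · rw [hRcg hg]; exact shift_one_le_iff.2 hcf
    obtain ⟨LG₁, LG₂, rfl, h⟩ := exists_append_forall₂_le hF hgf hG hLF
      (fun x hx => hLFF x (List.mem_cons_of_mem f hx)) hR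
    exact ⟨g :: LG₁, LG₂, rfl, .cons hgf h⟩

theorem not_oPrec_of_isChain_shift {n : ℕ} {F : Finset V} {LG : List V} (hF : IsFacet n F)
    (hG : IsFacetList n LG) (h : (origin :: LG).IsChain fun a b => b ∉ F → b = shift a 1) :
    ¬ OPrec F LG.toFinset := by
  have hchain := hF.1.2
  obtain ⟨LF, hLF, rfl⟩ := hF.exists_isFacetList
  obtain ⟨LG₁, LG₂, rfl, hle⟩ := exists_append_forall₂_le hchain le_rfl hG
    (hLF.imp fun _ _ => And.left) (fun _ => List.mem_toFinset.2) h
  rw [oPrec_toFinset_iff hLF.isChain hG.isChain]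
  have hlen := hle.length_eq
  rintro (hlt | ⟨hlen', hlex⟩)
  · simp only [List.length_append] at hlt; omega
  · obtain rfl : LG₂ = [] := by simpa [hlen] using hlen'
    exact hle.sigmaWord.not_lex_swap (by simpa using hlex)

theorem shelling_order_general (n : ℕ) (F G : Finset V)
    (hF : IsFacet n F) (hG : IsFacet n G) (hFG : OPrec F G) :
    ∃ H : Finset V, IsFacet n H ∧ OPrec H G ∧
      ∃ v ∈ G, F ∩ G ⊆ H ∩ G ∧ H ∩ G = G.erase v := by
  obtain ⟨LG, hLG, rfl⟩ := hG.exists_isFacetList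
  by_cases hshift : (origin :: LG).IsChain fun a b => b ∉ F → b = shift a 1
  · exact absurd hFG (not_oPrec_of_isChain_shift hF hLG hshift)
  rw [List.isChain_iff_forall_rel_of_append_cons_cons] at hshift
  push Not at hshift
  obtain ⟨p, v, X, Y, hsplit, hvF, hv⟩ := hshift
  obtain ⟨H, hH, hHG, hvG, hinter⟩ := hLG.exists_isFacet_inter_eq_erase hsplit hv
  refine ⟨H, hH, hHG, v, hvG, fun x hx => ?_, hinter⟩
  obtain ⟨hxF, hxG⟩ := Finset.mem_inter.1 hx
  exact hinter ▸ Finset.mem_erase.2 ⟨fun h => hvF (h ▸ hxF), hxG⟩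

/-- Theorem 5.4: the order `O` is a shelling order of `Δ(n)`, via the Björner–Wachs
criterion: for facets `F` preceding `G` there are a facet `H` preceding `G` and a vertex
`v ∈ G` with `F ∩ G ⊆ H ∩ G = G \ {v}`. -/
theorem shelling_order (n : ℕ) (hn : 1 ≤ n) (F G : Finset V)
    (hF : IsFacet n F) (hG : IsFacet n G) (hFG : OPrec F G) :
    ∃ H : Finset V, IsFacet n H ∧ OPrec H G ∧
      ∃ v ∈ G, F ∩ G ⊆ H ∩ G ∧ H ∩ G = G.erase v :=
  shelling_order_general n F G hF hG hFG
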